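/- Let S*_t := min{ x : H*_t(x) = min_{y∈ℝ} H*_t(y) } and s*_t := max{ x ≤ S*_t : H*_t(x) = H*_t(S*_t) + K_t } (these exist). Then the (s*, S*) policy is optimal: v^{s*,S*}_t(x) = V*_t(x) − c_t·x for every x ∈ ℝ and every t = 0,…,T−1, and for any pairs (σ_t, Σ_t) with σ_t ≤ Σ_t one has v^{σ,Σ}_t(x) ≥ V*_t(x) − c_t·x for every x ∈ ℝ and every t = 0,…,T−1. -/

import Mathlib

/-!
Scarf's argument. Call `f` `K`-convex when `f (u a + (1 - u) b) ≤ u f a + (1 - u) (f b + K)`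
for `a ≤ b` and `u ∈ [0, 1]`. If `V*_{t+1}` is `K_{t+1}`-convex, then
`H*_t = C_t + α E V*_{t+1} (· - D_t)` is `K_t`-convex because `C_t` is convex and
`α K_{t+1} ≤ K_t`. For a `K`-convex `H` with global minimiser `S` and `H s = H S + K`, ordering
up to `S` pays off exactly below `s`, so `V*_t x = H*_t (max x s*_t)`, which is again
`K_t`-convex. Expressed through `V*_{t+1} - c_{t+1} x`, the Bellman equation says that
`V*_t - c_t x` satisfies the recursion of the `(s*, S*)` policy with equality and that of any
other `(σ, Σ)` policy with `≤`; backward induction gives both claims. All the functions involved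
are bounded on `z ≤ b` by `A + B (b - z)`, which together with nonnegative integrable demand
makes every expectation finite.
-/

open MeasureTheory Filter Set

def KConvex (K : ℝ) (f : ℝ → ℝ) : Prop :=
  ∀ ⦃a b : ℝ⦄, a ≤ b → ∀ ⦃u : ℝ⦄, 0 ≤ u → u ≤ 1 →
    f (u * a + (1 - u) * b) ≤ u * f a + (1 - u) * (f b + K)

lemma exists_combo_eq_of_mem_Icc {a b x : ℝ} (hx : x ∈ Icc a b) :
    ∃ u : ℝ, 0 ≤ u ∧ u ≤ 1 ∧ u * a + (1 - u) * b = x := by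
  rw [← segment_eq_Icc (hx.1.trans hx.2)] at hx
  obtain ⟨u, v, hu, hv, huv, hux⟩ := hx
  obtain rfl := eq_sub_of_add_eq' huv
  exact ⟨u, hu, by linarith, by simpa only [smul_eq_mul] using hux⟩

lemma ConvexOn.kConvex_zero {f : ℝ → ℝ} (hf : ConvexOn ℝ univ f) : KConvex 0 f :=
  fun a b _ u hu hu1 => by
    simpa only [smul_eq_mul, add_zero] using
      hf.2 (mem_univ a) (mem_univ b) hu (sub_nonneg.2 hu1) (add_sub_cancel u 1)

namespace KConvex

variable {K K' : ℝ} {f g : ℝ → ℝ}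

lemma mono (hf : KConvex K f) (hKK' : K ≤ K') : KConvex K' f :=
  fun _ _ hab _ hu hu1 => (hf hab hu hu1).trans (by nlinarith)

lemma add (hf : KConvex K f) (hg : KConvex K' g) : KConvex (K + K') (fun x => f x + g x) :=
  fun _ _ hab _ hu hu1 => by linarith [hf hab hu hu1, hg hab hu hu1]

lemma const_mul (hf : KConvex K f) {c : ℝ} (hc : 0 ≤ c) :
    KConvex (c * K) (fun x => c * f x) :=
  fun _ _ hab _ hu hu1 => by nlinarith [hf hab hu hu1]

lemma integral_comp_sub {μ : Measure ℝ} [IsProbabilityMeasure μ] (hf : KConvex K f)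
    (hint : ∀ y, Integrable (fun ξ => f (y - ξ)) μ) :
    KConvex K (fun y => ∫ ξ, f (y - ξ) ∂μ) := by
  intro a b hab u hu hu1
  have hpt : ∀ ξ, f (u * a + (1 - u) * b - ξ) ≤ u * f (a - ξ) + (1 - u) * (f (b - ξ) + K) :=
    fun ξ => by
      have h := hf (sub_le_sub_right hab ξ) hu hu1
      rwa [show u * (a - ξ) + (1 - u) * (b - ξ) = u * a + (1 - u) * b - ξ by ring] at h
  have hbK : Integrable (fun ξ => f (b - ξ) + K) μ := (hint b).add (integrable_const K)
  calc ∫ ξ, f (u * a + (1 - u) * b - ξ) ∂μ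
      ≤ ∫ ξ, (u * f (a - ξ) + (1 - u) * (f (b - ξ) + K)) ∂μ :=
        integral_mono (hint _) (((hint a).const_mul u).add (hbK.const_mul (1 - u))) hpt
    _ = u * ∫ ξ, f (a - ξ) ∂μ + (1 - u) * ((∫ ξ, f (b - ξ) ∂μ) + K) := by
        rw [integral_add ((hint a).const_mul u) (hbK.const_mul (1 - u)), integral_const_mul,
          integral_const_mul, integral_add (hint b) (integrable_const K), integral_const,
          probReal_univ, one_smul]

variable {H : ℝ → ℝ} {s S : ℝ}

lemma le_add_of_le (hH : KConvex K H) (hS : ∀ y, H S ≤ H y) (hsS : s ≤ S)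
    (hs : H s = H S + K) {x y : ℝ} (hsx : s ≤ x) (hxy : x ≤ y) : H x ≤ K + H y := by
  have hK : 0 ≤ K := by linarith [hS s]
  rcases le_total x S with hxS | hSx
  · obtain ⟨u, hu, hu1, rfl⟩ := exists_combo_eq_of_mem_Icc ⟨hsx, hxS⟩
    have hcombo := hH hsS hu hu1
    rw [hs] at hcombo
    linarith [hS y]
  · obtain ⟨u, hu, hu1, rfl⟩ := exists_combo_eq_of_mem_Icc ⟨hSx, hxy⟩
    nlinarith [hH (hSx.trans hxy) hu hu1, mul_nonneg hu (sub_nonneg.2 (hS y)), mul_nonneg hu hK]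

lemma add_le_of_lt (hH : KConvex K H) (hS : ∀ y, H S ≤ H y) (hsS : s ≤ S)
    (hs : H s = H S + K) {x : ℝ} (hxs : x < s) : K + H S ≤ H x := by
  obtain ⟨u, hu, hu1, hux⟩ := exists_combo_eq_of_mem_Icc ⟨hxs.le, hsS⟩
  have hcombo := hH (hxs.le.trans hsS) hu hu1
  rw [hux, hs] at hcombo
  rcases hu.eq_or_lt with rfl | hu
  · have hSs : S = s := by linarith
    subst hSs
    linarith [hS x]
  · exact le_of_mul_le_mul_left (by linarith) hu

lemma comp_max (hH : KConvex K H) (hS : ∀ y, H S ≤ H y) (hs : H s = H S + K) :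
    KConvex K (fun x => H (max x s)) := by
  intro a b hab u hu hu1
  dsimp only
  have hK : 0 ≤ K := by linarith [hS s]
  have hu1' : 0 ≤ 1 - u := sub_nonneg.2 hu1
  have ham : a ≤ u * a + (1 - u) * b := by nlinarith [mul_nonneg hu1' (sub_nonneg.2 hab)]
  have hmb : u * a + (1 - u) * b ≤ b := by nlinarith [mul_nonneg hu (sub_nonneg.2 hab)]
  rcases le_total b s with hbs | hsb
  · rw [max_eq_right hbs, max_eq_right (hmb.trans hbs), max_eq_right (hab.trans hbs)]
    nlinarith [mul_nonneg hu1' hK]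
  rcases le_total s a with hsa | has
  · rw [max_eq_left hsa, max_eq_left (hsa.trans ham), max_eq_left hsb]
    exact hH hab hu hu1
  rw [max_eq_right has, max_eq_left hsb]
  have hsb' : H s ≤ H b + K := by linarith [hS b]
  rcases le_or_gt (u * a + (1 - u) * b) s with hms | hsm
  · rw [max_eq_right hms]
    nlinarith [mul_nonneg hu1' (sub_nonneg.2 hsb')]
  rw [max_eq_left hsm.le]
  -- as a combination of `s` and `b`, the point has weight `w ≥ u` on the left end
  obtain ⟨w, hw, hw1, hm⟩ := exists_combo_eq_of_mem_Icc ⟨hsm.le, hmb⟩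
  have huw : u ≤ w := by
    by_contra! hwu
    nlinarith [mul_nonneg hu (sub_nonneg.2 has),
      mul_pos (sub_pos.2 hwu) (sub_pos.2 (hsm.trans_le hmb))]
  have hHm := hH hsb hw hw1
  rw [hm] at hHm
  nlinarith [mul_nonneg (sub_nonneg.2 huw) (sub_nonneg.2 hsb')]

lemma le_setupCost (hH : KConvex K H) (hS : ∀ y, H S ≤ H y) (hsS : s ≤ S)
    (hs : H s = H S + K) {x y : ℝ} (hxy : x ≤ y) :
    H (max x s) ≤ K * (if x < y then 1 else 0) + H y := by
  rcases hxy.eq_or_lt with rfl | hxy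
  · rcases le_or_gt s x with hsx | hxs
    · simp [max_eq_left hsx]
    · simpa [max_eq_right hxs.le, hs, add_comm] using hH.add_le_of_lt hS hsS hs hxs
  · rcases le_total s x with hsx | hxs
    · simpa [max_eq_left hsx, hxy] using hH.le_add_of_le hS hsS hs hsx hxy.le
    · simp only [max_eq_right hxs, hs, hxy, if_true, mul_one]
      linarith [hS y]

theorem sInf_setupCost_eq (hH : KConvex K H) (hS : ∀ y, H S ≤ H y) (hsS : s ≤ S)
    (hs : H s = H S + K) (x : ℝ) :
    sInf ((fun y => K * (if x < y then 1 else 0) + H y) '' Ici x) = H (max x s) := by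
  refine IsLeast.csInf_eq ⟨?_, ?_⟩
  · rcases le_or_gt s x with hsx | hxs
    · exact ⟨x, mem_Ici.2 le_rfl, by simp [max_eq_left hsx]⟩
    · exact ⟨S, mem_Ici.2 (hxs.le.trans hsS), by
        simp [hxs.trans_le hsS, max_eq_right hxs.le, hs, add_comm]⟩
  · rintro _ ⟨y, hxy, rfl⟩
    exact hH.le_setupCost hS hsS hs hxy

end KConvex

lemma sInf_setupCost_le {K : ℝ} (hK : 0 ≤ K) {H : ℝ → ℝ} {m : ℝ} (hm : ∀ y, m ≤ H y)
    {x y : ℝ} (hxy : x ≤ y) :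
    sInf ((fun y => K * (if x < y then 1 else 0) + H y) '' Ici x) ≤
      K * (if x < y then 1 else 0) + H y := by
  refine csInf_le ⟨m, ?_⟩ ⟨y, hxy, rfl⟩
  rintro _ ⟨z, -, rfl⟩
  have : 0 ≤ K * (if x < z then 1 else 0) := mul_nonneg hK (by split_ifs <;> norm_num)
  linarith [hm z]

def LinearGrowthAtBot (f : ℝ → ℝ) : Prop :=
  ∀ b, ∃ A B : ℝ, ∀ z ≤ b, |f z| ≤ A + B * (b - z)

def BoundedOnIcc (f : ℝ → ℝ) : Prop :=
  ∀ a b, ∃ M, ∀ z ∈ Icc a b, |f z| ≤ M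

lemma abs_le_abs_add_sub {z b : ℝ} (hzb : z ≤ b) : |z| ≤ |b| + (b - z) := by
  rcases abs_cases z with ⟨h, _⟩ | ⟨h, _⟩ <;> linarith [le_abs_self b, neg_abs_le b]

namespace LinearGrowthAtBot

variable {f : ℝ → ℝ}

lemma boundedOnIcc (hf : LinearGrowthAtBot f) : BoundedOnIcc f := by
  intro a b
  obtain ⟨A, B, h⟩ := hf b
  refine ⟨A + |B| * (b - a), fun z hz => (h z hz.2).trans ?_⟩
  nlinarith [mul_nonneg (sub_nonneg.2 (le_abs_self B)) (sub_nonneg.2 hz.2),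
    mul_nonneg (abs_nonneg B) (sub_nonneg.2 hz.1)]

lemma sub_mul (hf : LinearGrowthAtBot f) (c : ℝ) : LinearGrowthAtBot (fun x => f x - c * x) := by
  intro b
  obtain ⟨A, B, h⟩ := hf b
  refine ⟨A + |c| * |b|, B + |c|, fun z hz => ?_⟩
  have hcz : |c * z| ≤ |c| * |b| + |c| * (b - z) := by
    rw [abs_mul, ← mul_add]
    exact mul_le_mul_of_nonneg_left (abs_le_abs_add_sub hz) (abs_nonneg c)
  linarith [abs_sub (f z) (c * z), h z hz]

variable {μ : Measure ℝ} [IsProbabilityMeasure μ]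

lemma integrable_comp_sub (hf : LinearGrowthAtBot f) (hμ : ∀ᵐ ξ ∂μ, 0 ≤ ξ)
    (hμ1 : Integrable (fun ξ => ξ) μ) (hm : Measurable f) (y : ℝ) :
    Integrable (fun ξ => f (y - ξ)) μ := by
  obtain ⟨A, B, h⟩ := hf y
  refine ((integrable_const A).add (hμ1.const_mul B)).mono'
    (hm.comp (measurable_const.sub measurable_id)).aestronglyMeasurable ?_
  filter_upwards [hμ] with ξ hξ
  simpa using h (y - ξ) (by linarith)

lemma integral_comp_sub (hf : LinearGrowthAtBot f) (hμ : ∀ᵐ ξ ∂μ, 0 ≤ ξ)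
    (hμ1 : Integrable (fun ξ => ξ) μ) (hm : Measurable f) :
    LinearGrowthAtBot (fun y => ∫ ξ, f (y - ξ) ∂μ) := by
  intro b
  obtain ⟨A, B, h⟩ := hf b
  refine ⟨A + B * ∫ ξ, ξ ∂μ, B, fun y hy => ?_⟩
  have hbound : Integrable (fun ξ => A + B * (b - y) + B * ξ) μ :=
    (integrable_const _).add (hμ1.const_mul B)
  calc |∫ ξ, f (y - ξ) ∂μ| ≤ ∫ ξ, |f (y - ξ)| ∂μ := abs_integral_le_integral_abs
    _ ≤ ∫ ξ, (A + B * (b - y) + B * ξ) ∂μ := by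
        refine integral_mono_ae (hf.integrable_comp_sub hμ hμ1 hm y).abs hbound ?_
        filter_upwards [hμ] with ξ hξ
        linarith [h (y - ξ) (by linarith)]
    _ = A + B * ∫ ξ, ξ ∂μ + B * (b - y) := by
        rw [integral_add (integrable_const _) (hμ1.const_mul B), integral_const,
          integral_const_mul, probReal_univ, one_smul]
        ring

end LinearGrowthAtBot

lemma Measurable.integral_comp_sub {μ : Measure ℝ} [SFinite μ] {f : ℝ → ℝ}
    (hf : Measurable f) :
    Measurable fun y => ∫ ξ, f (y - ξ) ∂μ :=
  (hf.comp (measurable_fst.sub measurable_snd)).stronglyMeasurable.integral_prod_right'.measurable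

lemma Continuous.boundedOnIcc {g : ℝ → ℝ} (hg : Continuous g) : BoundedOnIcc g :=
  fun a b => by
  simpa using (isCompact_Icc (a := a) (b := b)).exists_bound_of_continuousOn hg.continuousOn

lemma BoundedOnIcc.add_mul {g h : ℝ → ℝ} (hg : BoundedOnIcc g) (hh : BoundedOnIcc h)
    (α : ℝ) :
    BoundedOnIcc (fun z => g z + α * h z) := by
  intro a b
  obtain ⟨Mg, hMg⟩ := hg a b
  obtain ⟨Mh, hMh⟩ := hh a b
  refine ⟨Mg + |α| * Mh, fun z hz => ?_⟩
  have hαh : |α * h z| ≤ |α| * Mh := by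
    rw [abs_mul]; exact mul_le_mul_of_nonneg_left (hMh z hz) (abs_nonneg α)
  linarith [abs_add_le (g z) (α * h z), hMg z hz]

lemma BoundedOnIcc.linearGrowthAtBot_comp_max {g : ℝ → ℝ} (hg : BoundedOnIcc g) (s : ℝ) :
    LinearGrowthAtBot (fun x => g (max x s)) := fun b => by
  obtain ⟨M, hM⟩ := hg s (max b s)
  exact ⟨M, 0, fun z hz => by simpa using hM _ ⟨le_max_right z s, max_le_max_right s hz⟩⟩

lemma ConvexOn.continuous_of_univ {f : ℝ → ℝ} (hf : ConvexOn ℝ univ f) : Continuous f :=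
  continuousOn_univ.1 (hf.continuousOn isOpen_univ)

lemma integral_comp_sub_sub_mul {μ : Measure ℝ} [IsProbabilityMeasure μ]
    (hμ1 : Integrable (fun ξ => ξ) μ) {f : ℝ → ℝ} {y : ℝ}
    (hf : Integrable (fun ξ => f (y - ξ)) μ) (c : ℝ) :
    ∫ ξ, (f (y - ξ) - c * (y - ξ)) ∂μ =
      ∫ ξ, f (y - ξ) ∂μ - c * y + c * ∫ ξ, ξ ∂μ := by
  have hy : Integrable (fun ξ => y - ξ) μ := (integrable_const y).sub hμ1
  rw [integral_sub hf (hy.const_mul c), integral_const_mul,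
    integral_sub (integrable_const y) hμ1, integral_const, probReal_univ, one_smul]
  ring

theorem valueFunction_step {μ : Measure ℝ} [IsProbabilityMeasure μ] (hμ : ∀ᵐ ξ ∂μ, 0 ≤ ξ)
    (hμ1 : Integrable (fun ξ => ξ) μ) {α K K' s S : ℝ} (hα : 0 ≤ α) (hKK' : α * K' ≤ K)
    {C V' H V : ℝ → ℝ}
    (hC : ConvexOn ℝ univ C) (hV'm : Measurable V') (hV'g : LinearGrowthAtBot V')
    (hV'k : KConvex K' V') (hH : ∀ y, H y = C y + α * ∫ ξ, V' (y - ξ) ∂μ)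
    (hS : ∀ y, H S ≤ H y) (hsS : s ≤ S) (hs : H s = H S + K)
    (hV : ∀ x, V x = sInf ((fun y => K * (if x < y then 1 else 0) + H y) '' Ici x)) :
    (∀ x, V x = H (max x s)) ∧ Measurable V ∧ LinearGrowthAtBot V ∧ KConvex K V := by
  obtain rfl : H = fun y => C y + α * ∫ ξ, V' (y - ξ) ∂μ := funext hH
  have hHk : KConvex K (fun y => C y + α * ∫ ξ, V' (y - ξ) ∂μ) :=
    (hC.kConvex_zero.add ((hV'k.integral_comp_sub
      (hV'g.integrable_comp_sub hμ hμ1 hV'm)).const_mul hα)).mono (by linarith)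
  have hshape : ∀ x, V x = _ := fun x => (hV x).trans (hHk.sInf_setupCost_eq hS hsS hs x)
  obtain rfl := funext hshape
  exact ⟨hshape,
    (hC.continuous_of_univ.measurable.add (measurable_const.mul hV'm.integral_comp_sub)).comp
      (measurable_id.max measurable_const),
    (hC.continuous_of_univ.boundedOnIcc.add_mul
      (hV'g.integral_comp_sub hμ hμ1 hV'm).boundedOnIcc α).linearGrowthAtBot_comp_max s,
    hHk.comp_max hS hs⟩

noncomputable def orderUpTo (σ S x : ℝ) : ℝ := if x < σ then S else x

-- the paper's `H*_t y`, rewritten in terms of `w = V*_{t+1} - c_{t+1} • id`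
noncomputable def expectedCost (c : ℝ) (G : ℝ → ℝ) (α : ℝ) (μ : Measure ℝ) (w : ℝ → ℝ)
    (y : ℝ) : ℝ :=
  c * y + G y + α * ∫ ξ, w (y - ξ) ∂μ

-- the right-hand side of the recursion for `v^{σ,Σ}_t`, with `w = v^{σ,Σ}_{t+1}`
noncomputable def policyCost (K c : ℝ) (G : ℝ → ℝ) (α : ℝ) (μ : Measure ℝ) (σ S : ℝ)
    (w : ℝ → ℝ) (x : ℝ) : ℝ :=
  (if x < σ then K else 0) + c * (orderUpTo σ S x - x) + G (orderUpTo σ S x)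
    + α * ∫ ξ, w (orderUpTo σ S x - ξ) ∂μ

section Policy

variable {K c α σ S : ℝ} {G w w' : ℝ → ℝ} {μ : Measure ℝ}

lemma orderUpTo_mem_Icc (hσS : σ ≤ S) {x b : ℝ} (hxb : x ≤ b) :
    orderUpTo σ S x ∈ Icc σ (max b S) := by
  unfold orderUpTo
  split_ifs with h
  · exact ⟨hσS, le_max_right b S⟩
  · exact ⟨not_lt.1 h, hxb.trans (le_max_left b S)⟩

lemma policyCost_eq (x : ℝ) : policyCost K c G α μ σ S w x =
    (if x < σ then K else 0) + expectedCost c G α μ w (orderUpTo σ S x) - c * x := by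
  unfold policyCost expectedCost
  ring

lemma policyCost_mono (hα : 0 ≤ α) (hw : ∀ y, Integrable (fun ξ => w (y - ξ)) μ)
    (hw' : ∀ y, Integrable (fun ξ => w' (y - ξ)) μ) (hle : ∀ z, w z ≤ w' z) (x : ℝ) :
    policyCost K c G α μ σ S w x ≤ policyCost K c G α μ σ S w' x := by
  unfold policyCost
  gcongr with ξ
  exacts [hw _, hw' _, fun ξ => hle _]

lemma measurable_policyCost [SFinite μ] (hG : Measurable G) (hw : Measurable w) :
    Measurable (policyCost K c G α μ σ S w) := by
  have hy : Measurable (orderUpTo σ S) :=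
    Measurable.ite measurableSet_Iio measurable_const measurable_id
  have hE : Measurable (expectedCost c G α μ w) :=
    ((measurable_const.mul measurable_id).add hG).add (measurable_const.mul hw.integral_comp_sub)
  simp_rw [funext policyCost_eq]
  exact ((Measurable.ite measurableSet_Iio measurable_const measurable_const).add (hE.comp hy)).sub
    (measurable_const.mul measurable_id)

lemma linearGrowthAtBot_policyCost [IsProbabilityMeasure μ] (hμ : ∀ᵐ ξ ∂μ, 0 ≤ ξ)
    (hμ1 : Integrable (fun ξ => ξ) μ) (hσS : σ ≤ S) (hG : Continuous G) (hwm : Measurable w)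
    (hw : LinearGrowthAtBot w) : LinearGrowthAtBot (policyCost K c G α μ σ S w) := by
  intro b
  have hE : BoundedOnIcc (expectedCost c G α μ w) :=
    (continuous_const.mul continuous_id).add hG |>.boundedOnIcc.add_mul
      (hw.integral_comp_sub hμ hμ1 hwm).boundedOnIcc α
  obtain ⟨M, hM⟩ := hE σ (max b S)
  refine ⟨|K| + M + |c| * |b|, |c|, fun x hx => ?_⟩
  have hK : |(if x < σ then K else 0)| ≤ |K| := by split_ifs <;> simp
  have hcx : |c * x| ≤ |c| * |b| + |c| * (b - x) := by
    rw [abs_mul, ← mul_add]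
    exact mul_le_mul_of_nonneg_left (abs_le_abs_add_sub hx) (abs_nonneg c)
  rw [policyCost_eq]
  set k := if x < σ then K else 0
  set e := expectedCost c G α μ w (orderUpTo σ S x)
  linarith [abs_sub (k + e) (c * x), abs_add_le k e, hM _ (orderUpTo_mem_Icc hσS hx)]

variable {H V : ℝ → ℝ}

lemma sub_mul_le_policyCost (hσS : σ ≤ S)
    (hV : ∀ x y, x ≤ y → V x ≤ K * (if x < y then 1 else 0) + H y)
    (hH : ∀ y, H y = expectedCost c G α μ w y) (x : ℝ) :
    V x - c * x ≤ policyCost K c G α μ σ S w x := by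
  rw [policyCost_eq, ← hH]
  by_cases hx : x < σ
  · have := hV x S (hx.le.trans hσS)
    simp only [orderUpTo, hx, hx.trans_le hσS, if_true, mul_one] at this ⊢
    linarith
  · have := hV x x le_rfl
    simp only [orderUpTo, hx, lt_irrefl, if_false, mul_zero] at this ⊢
    linarith

lemma policyCost_eq_sub_mul {s : ℝ} (hV : ∀ x, V x = H (max x s))
    (hH : ∀ y, H y = expectedCost c G α μ w y) (hs : H s = H S + K) (x : ℝ) :
    policyCost K c G α μ s S w x = V x - c * x := by
  rw [policyCost_eq, ← hH, hV]
  by_cases hx : x < s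
  · simp only [orderUpTo, hx, if_true, max_eq_right hx.le, hs]
    ring
  · simp only [orderUpTo, hx, if_false, max_eq_left (not_lt.1 hx)]
    ring

theorem policyCost_step [IsProbabilityMeasure μ] (hμ : ∀ᵐ ξ ∂μ, 0 ≤ ξ)
    (hμ1 : Integrable (fun ξ => ξ) μ) (hα : 0 ≤ α) (hσS : σ ≤ S) (hG : Continuous G)
    (hwm : Measurable w) (hwg : LinearGrowthAtBot w) (hw'm : Measurable w')
    (hw'g : LinearGrowthAtBot w') (hle : ∀ z, w z ≤ w' z)
    (hV : ∀ x y, x ≤ y → V x ≤ K * (if x < y then 1 else 0) + H y)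
    (hH : ∀ y, H y = expectedCost c G α μ w y) :
    Measurable (policyCost K c G α μ σ S w') ∧
      LinearGrowthAtBot (policyCost K c G α μ σ S w') ∧
      ∀ x, V x - c * x ≤ policyCost K c G α μ σ S w' x :=
  ⟨measurable_policyCost hG.measurable hw'm,
    linearGrowthAtBot_policyCost hμ hμ1 hσS hG hw'm hw'g,
    fun x => (sub_mul_le_policyCost hσS hV hH x).trans (policyCost_mono hα
      (hwg.integrable_comp_sub hμ hμ1 hwm) (hw'g.integrable_comp_sub hμ hμ1 hw'm) hle x)⟩

end Policy

theorem stmt2_general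
    (T : ℕ)
    (α : ℝ) (hα0 : 0 < α)
    (K : ℕ → ℝ) (hK0 : ∀ t, t < T → 0 ≤ K t)
    (hKmono : ∀ t, t + 2 ≤ T → α * K (t + 1) ≤ K t)
    (ν : ℕ → MeasureTheory.Measure ℝ)
    (hprob : ∀ t, MeasureTheory.IsProbabilityMeasure (ν t))
    (hpos : ∀ t, ν t (Set.Iio 0) = 0)
    (C : ℕ → ℝ → ℝ)
    (hCconv : ∀ t, t < T → ConvexOn ℝ Set.univ (C t))
    (Hstar Vstar : ℕ → ℝ → ℝ)
    (hVstarT : ∀ x, Vstar T x = 0)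
    (hHstar : ∀ t, t < T → ∀ y,
      Hstar t y = C t y + α * ∫ ξ, Vstar (t + 1) (y - ξ) ∂(ν t))
    (hVstar : ∀ t, t < T → ∀ x,
      Vstar t x = sInf ((fun y => K t * (if x < y then (1 : ℝ) else 0) + Hstar t y) '' Set.Ici x))
    (c : ℕ → ℝ) (G : ℕ → ℝ → ℝ)
    (hDint : ∀ t, t < T → MeasureTheory.Integrable (fun ξ : ℝ => ξ) (ν t))
    (hCdef : ∀ t, t < T → ∀ y,
      C t y = (c t - α * c (t + 1)) * y + G t y + α * c (t + 1) * ∫ ξ, ξ ∂(ν t))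
    (Sstar sstar : ℕ → ℝ)
    (hSstar : ∀ t, t < T → IsLeast {x | ∀ y, Hstar t x ≤ Hstar t y} (Sstar t))
    (hsstar : ∀ t, t < T →
      IsGreatest {x | x ≤ Sstar t ∧ Hstar t x = Hstar t (Sstar t) + K t} (sstar t))
    :
    (∀ vps : ℕ → ℝ → ℝ,
      (∀ x, vps T x = -(c T) * x) →
      (∀ t, t < T → ∀ x, vps t x =
        (if x < sstar t then K t else 0)
          + c t * ((if x < sstar t then Sstar t else x) - x)
          + G t (if x < sstar t then Sstar t else x)
          + α * ∫ ξ, vps (t + 1) ((if x < sstar t then Sstar t else x) - ξ) ∂(ν t)) →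
      ∀ t, t < T → ∀ x, vps t x = Vstar t x - c t * x)
    ∧ (∀ σ Sig : ℕ → ℝ, (∀ t, t < T → σ t ≤ Sig t) →
      ∀ vp : ℕ → ℝ → ℝ,
      (∀ x, vp T x = -(c T) * x) →
      (∀ t, t < T → ∀ x, vp t x =
        (if x < σ t then K t else 0)
          + c t * ((if x < σ t then Sig t else x) - x)
          + G t (if x < σ t then Sig t else x)
          + α * ∫ ξ, vp (t + 1) ((if x < σ t then Sig t else x) - ξ) ∂(ν t)) →
      ∀ t, t < T → ∀ x, Vstar t x - c t * x ≤ vp t x) := by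
  have hν : ∀ t, ∀ᵐ ξ ∂ν t, 0 ≤ ξ := fun t => by
    rw [ae_iff]; simp only [not_le]; exact hpos t
  have hV : ∀ u ≤ T, Measurable (Vstar u) ∧ LinearGrowthAtBot (Vstar u) ∧
      KConvex (if u < T then K u else 0) (Vstar u) ∧
      (u < T → ∀ x, Vstar u x = Hstar u (max x (sstar u))) := by
    intro u hu
    induction hu using Nat.decreasingInduction with
    | self =>
      rw [show Vstar T = fun _ => 0 from funext hVstarT]
      exact ⟨measurable_const, fun b => ⟨0, 0, by simp⟩, fun a b _ u _ _ => by simp,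
        fun h => absurd h (lt_irrefl T)⟩
    | of_succ t ht ih =>
      obtain ⟨hm, hg, hk, -⟩ := ih
      have := hprob t
      have hKK : α * (if t + 1 < T then K (t + 1) else 0) ≤ K t := by
        split_ifs with h
        exacts [hKmono t h, by simpa using hK0 t ht]
      obtain ⟨hshape, hm', hg', hk'⟩ := valueFunction_step (hν t) (hDint t ht) hα0.le hKK
        (hCconv t ht) hm hg hk (hHstar t ht) (hSstar t ht).1 (hsstar t ht).1.1
        (hsstar t ht).1.2 (hVstar t ht)
      exact ⟨hm', hg', by simpa [ht] using hk', fun _ => hshape⟩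
  have hG : ∀ t < T, Continuous (G t) := fun t ht => by
    have hC := (hCconv t ht).continuous_of_univ
    rw [show G t = fun y => C t y - (c t - α * c (t + 1)) * y - α * c (t + 1) * ∫ ξ, ξ ∂ν t
      from funext fun y => by rw [hCdef t ht]; ring]
    fun_prop
  set W : ℕ → ℝ → ℝ := fun t x => Vstar t x - c t * x with hWdef
  have hW : ∀ u ≤ T, Measurable (W u) ∧ LinearGrowthAtBot (W u) := fun u hu =>
    ⟨(hV u hu).1.sub (measurable_const.mul measurable_id), (hV u hu).2.1.sub_mul (c u)⟩
  have hH : ∀ t < T, ∀ y, Hstar t y = expectedCost (c t) (G t) α (ν t) (W (t + 1)) y := by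
    intro t ht y
    have := hprob t
    obtain ⟨hm, hg, -⟩ := hV (t + 1) ht
    rw [hHstar t ht, hCdef t ht, expectedCost, hWdef, integral_comp_sub_sub_mul (hDint t ht)
      (hg.integrable_comp_sub (hν t) (hDint t ht) hm y)]
    ring
  have hVle : ∀ t < T, ∀ x y, x ≤ y →
      Vstar t x ≤ K t * (if x < y then 1 else 0) + Hstar t y := fun t ht x y hxy =>
    (hVstar t ht x).trans_le (sInf_setupCost_le (hK0 t ht) (hSstar t ht).1 hxy)
  refine ⟨fun vps hvpsT hvps => ?_, fun σ S hσS vp hvpT hvp => ?_⟩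
  · suffices ∀ t ≤ T, vps t = W t from fun t ht x => congrFun (this t ht.le) x
    intro t ht
    induction ht using Nat.decreasingInduction with
    | self => funext x; simp [hvpsT, hVstarT, hWdef]
    | of_succ t ht ih =>
      funext x
      rw [hvps t ht x]
      change policyCost (K t) (c t) (G t) α (ν t) (sstar t) (Sstar t) (vps (t + 1)) x = _
      rw [ih]
      exact policyCost_eq_sub_mul ((hV t ht.le).2.2.2 ht) (hH t ht) (hsstar t ht).1.2 x
  · suffices ∀ t ≤ T, Measurable (vp t) ∧ LinearGrowthAtBot (vp t) ∧ ∀ x, W t x ≤ vp t x from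
      fun t ht x => (this t ht.le).2.2 x
    intro t ht
    induction ht using Nat.decreasingInduction with
    | self =>
      rw [show vp T = fun x => Vstar T x - c T * x by funext x; simp [hvpT, hVstarT]]
      exact ⟨(hW T le_rfl).1, (hW T le_rfl).2, fun x => le_rfl⟩
    | of_succ t ht ih =>
      obtain ⟨hm, hg, hle⟩ := ih
      have := hprob t
      rw [show vp t = policyCost (K t) (c t) (G t) α (ν t) (σ t) (S t) (vp (t + 1))
        from funext (hvp t ht)]
      exact policyCost_step (hν t) (hDint t ht) hα0.le (hσS t ht) (hG t ht) (hW (t + 1) ht).1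
        (hW (t + 1) ht).2 hm hg hle (hVle t ht) (hH t ht)

theorem stmt2
    (T : ℕ) (hT : 2 ≤ T)
    (α : ℝ) (hα0 : 0 < α) (hα1 : α ≤ 1)
    (K : ℕ → ℝ) (hK0 : ∀ t, t < T → 0 ≤ K t)
    (hKmono : ∀ t, t + 2 ≤ T → α * K (t + 1) ≤ K t)
    (ν : ℕ → MeasureTheory.Measure ℝ)
    (hprob : ∀ t, MeasureTheory.IsProbabilityMeasure (ν t))
    (hpos : ∀ t, ν t (Set.Iio 0) = 0)
    (F : ℕ → ℝ → ℝ) (hF : ∀ t x, F t x = (ν t (Set.Iic x)).toReal)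
    (C : ℕ → ℝ → ℝ)
    (hCconv : ∀ t, t < T → ConvexOn ℝ Set.univ (C t))
    (hCcoer : ∀ t, t < T → Filter.Tendsto (C t) (Filter.cocompact ℝ) Filter.atTop)
    (Hstar Vstar : ℕ → ℝ → ℝ)
    (hVstarT : ∀ x, Vstar T x = 0)
    (hHstar : ∀ t, t < T → ∀ y,
      Hstar t y = C t y + α * ∫ ξ, Vstar (t + 1) (y - ξ) ∂(ν t))
    (hVstar : ∀ t, t < T → ∀ x,
      Vstar t x = sInf ((fun y => K t * (if x < y then (1 : ℝ) else 0) + Hstar t y) '' Set.Ici x))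
    (c : ℕ → ℝ) (G : ℕ → ℝ → ℝ)
    (hDint : ∀ t, t < T → MeasureTheory.Integrable (fun ξ : ℝ => ξ) (ν t))
    (hCdef : ∀ t, t < T → ∀ y,
      C t y = (c t - α * c (t + 1)) * y + G t y + α * c (t + 1) * ∫ ξ, ξ ∂(ν t))
    (Sstar sstar : ℕ → ℝ)
    (hSstar : ∀ t, t < T → IsLeast {x | ∀ y, Hstar t x ≤ Hstar t y} (Sstar t))
    (hsstar : ∀ t, t < T →
      IsGreatest {x | x ≤ Sstar t ∧ Hstar t x = Hstar t (Sstar t) + K t} (sstar t))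
    :
    (∀ vps : ℕ → ℝ → ℝ,
      (∀ x, vps T x = -(c T) * x) →
      (∀ t, t < T → ∀ x, vps t x =
        (if x < sstar t then K t else 0)
          + c t * ((if x < sstar t then Sstar t else x) - x)
          + G t (if x < sstar t then Sstar t else x)
          + α * ∫ ξ, vps (t + 1) ((if x < sstar t then Sstar t else x) - ξ) ∂(ν t)) →
      ∀ t, t < T → ∀ x, vps t x = Vstar t x - c t * x)
    ∧ (∀ σ Sig : ℕ → ℝ, (∀ t, t < T → σ t ≤ Sig t) →
      ∀ vp : ℕ → ℝ → ℝ,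
      (∀ x, vp T x = -(c T) * x) →
      (∀ t, t < T → ∀ x, vp t x =
        (if x < σ t then K t else 0)
          + c t * ((if x < σ t then Sig t else x) - x)
          + G t (if x < σ t then Sig t else x)
          + α * ∫ ξ, vp (t + 1) ((if x < σ t then Sig t else x) - ξ) ∂(ν t)) →
      ∀ t, t < T → ∀ x, Vstar t x - c t * x ≤ vp t x) :=
  stmt2_general T α hα0 K hK0 hKmono ν hprob hpos C hCconv Hstar Vstar hVstarT hHstar hVstar c G
    hDint hCdef Sstar sstar hSstar hsstar
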